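/- Let γ > 0, β ∈ ℝ, c > 0, and write L = L_c and ‖L‖ = (∫₀¹ ∫₀ˣ L(x,y)² dy dx)^{1/2}. Suppose w : [0,1] → ℝ is continuous, v : [0,1] → ℝ is twice continuously differentiable with v'(0) = v'(1) = 0, and for every x ∈ [0,1]: 0 = v''(x) − γ·v(x) + β·w(x) + β·∫₀ˣ L(x,y)·w(y) dy. Then (∫₀¹ v(x)² dx)^{1/2} ≤ (|β|/γ)·(1 + ‖L‖)·(∫₀¹ w(x)² dx)^{1/2}. -/
import Mathlib


/-- The inverse backstepping kernel `L_c`. -/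
noncomputable def Lker (c x y : ℝ) : ℝ :=
  -(c / 2) * x * ∑' m : ℕ, (-1 : ℝ) ^ m * (c * (x ^ 2 - y ^ 2) / 4) ^ m /
    ((Nat.factorial m : ℝ) * (Nat.factorial (m + 1) : ℝ))

/-- L² norm of a kernel over the triangle {0 ≤ y ≤ x ≤ 1}. -/
noncomputable def kerNorm (f : ℝ → ℝ → ℝ) : ℝ :=
  Real.sqrt (∫ x in (0:ℝ)..1, ∫ y in (0:ℝ)..x, (f x y) ^ 2)

open MeasureTheory Set intervalIntegral

private lemma gcont :
    Continuous (fun u : ℝ => ∑' m : ℕ, (-1 : ℝ) ^ m * u ^ m /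
      ((Nat.factorial m : ℝ) * (Nat.factorial (m + 1) : ℝ))) := by
  rw [continuous_iff_continuousAt]
  intro u0
  set R : ℝ := |u0| + 1 with hRdef
  have hR : (0:ℝ) < R := by positivity
  have h : ContinuousOn (fun u : ℝ => ∑' m : ℕ, (-1 : ℝ) ^ m * u ^ m /
      ((Nat.factorial m : ℝ) * (Nat.factorial (m + 1) : ℝ))) (Metric.ball (0:ℝ) R) := by
    apply continuousOn_tsum (u := fun m => R ^ m / (Nat.factorial m : ℝ))
    · intro m; fun_prop
    · exact Real.summable_pow_div_factorial R
    · intro m u hu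
      have hu' : |u| < R := by simpa [Real.dist_eq] using hu
      have hfac1 : (0:ℝ) < (Nat.factorial m : ℝ) := by positivity
      have hfac2 : (1:ℝ) ≤ (Nat.factorial (m+1) : ℝ) := by
        exact_mod_cast Nat.one_le_iff_ne_zero.mpr (Nat.factorial_ne_zero _)
      have hnum : |(-1 : ℝ) ^ m * u ^ m| ≤ R ^ m := by
        rw [abs_mul, abs_pow, abs_pow, abs_neg, abs_one, one_pow, one_mul]
        exact pow_le_pow_left₀ (abs_nonneg u) hu'.le m
      have hden : (Nat.factorial m : ℝ) ≤ (Nat.factorial m : ℝ) * (Nat.factorial (m+1) : ℝ) :=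
        le_mul_of_one_le_right hfac1.le hfac2
      calc ‖(-1 : ℝ) ^ m * u ^ m / ((Nat.factorial m : ℝ) * (Nat.factorial (m + 1) : ℝ))‖
          = |(-1 : ℝ) ^ m * u ^ m| / ((Nat.factorial m : ℝ) * (Nat.factorial (m + 1) : ℝ)) := by
            have hdpos : (0:ℝ) < (Nat.factorial m : ℝ) * (Nat.factorial (m + 1) : ℝ) := by
              positivity
            rw [Real.norm_eq_abs, abs_div, abs_of_pos hdpos]
        _ ≤ R ^ m / (Nat.factorial m : ℝ) :=
            div_le_div₀ (by positivity) hnum hfac1 hden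
  exact h.continuousAt (Metric.isOpen_ball.mem_nhds (by simp [Real.dist_eq, hRdef]))

private lemma Lker_cont (c : ℝ) : Continuous (fun p : ℝ × ℝ => Lker c p.1 p.2) := by
  have : (fun p : ℝ × ℝ => Lker c p.1 p.2) = fun p : ℝ × ℝ =>
      -(c / 2) * p.1 * (fun u : ℝ => ∑' m : ℕ, (-1 : ℝ) ^ m * u ^ m /
        ((Nat.factorial m : ℝ) * (Nat.factorial (m + 1) : ℝ)))
        (c * (p.1 ^ 2 - p.2 ^ 2) / 4) := rfl
  rw [this]
  exact (continuous_const.mul continuous_fst).mul (gcont.comp (by fun_prop))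

/-- Cauchy–Schwarz for interval integrals of continuous functions. -/
private lemma cs_abs {a b : ℝ} (hab : a ≤ b) {f g : ℝ → ℝ}
    (hf : ContinuousOn f (Icc a b)) (hg : ContinuousOn g (Icc a b)) :
    |∫ x in a..b, f x * g x| ≤
      Real.sqrt (∫ x in a..b, f x ^ 2) * Real.sqrt (∫ x in a..b, g x ^ 2) := by
  have huIcc : uIcc a b = Icc a b := uIcc_of_le hab
  have hfI : IntervalIntegrable f volume a b := (huIcc ▸ hf).intervalIntegrable
  have hgI : IntervalIntegrable g volume a b := (huIcc ▸ hg).intervalIntegrable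
  have hfgI : IntervalIntegrable (fun x => f x * g x) volume a b :=
    (huIcc ▸ hf.mul hg).intervalIntegrable
  have hf2I : IntervalIntegrable (fun x => f x ^ 2) volume a b :=
    (huIcc ▸ hf.pow 2).intervalIntegrable
  have hg2I : IntervalIntegrable (fun x => g x ^ 2) volume a b :=
    (huIcc ▸ hg.pow 2).intervalIntegrable
  set A := ∫ x in a..b, f x ^ 2 with hA
  set B := ∫ x in a..b, g x ^ 2 with hB
  set C := ∫ x in a..b, f x * g x with hC
  have hA0 : 0 ≤ A := intervalIntegral.integral_nonneg hab fun u _ => sq_nonneg _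
  have hB0 : 0 ≤ B := intervalIntegral.integral_nonneg hab fun u _ => sq_nonneg _
  have hquad : ∀ t : ℝ, 0 ≤ A * (t * t) + (2 * C) * t + B := by
    intro t
    have hpos : 0 ≤ ∫ x in a..b, (t * f x + g x) ^ 2 :=
      intervalIntegral.integral_nonneg hab fun u _ => sq_nonneg _
    have hexp : (∫ x in a..b, (t * f x + g x) ^ 2)
        = A * (t * t) + (2 * C) * t + B := by
      have : (fun x => (t * f x + g x) ^ 2)
          = fun x => ((t * t) * f x ^ 2 + (2 * t) * (f x * g x)) + g x ^ 2 := by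
        funext x; ring
      rw [this, intervalIntegral.integral_add ((hf2I.const_mul _).add (hfgI.const_mul _)) hg2I,
        intervalIntegral.integral_add (hf2I.const_mul _) (hfgI.const_mul _),
        intervalIntegral.integral_const_mul, intervalIntegral.integral_const_mul]
      ring
    linarith [hexp ▸ hpos]
  have hdisc := discrim_le_zero hquad
  rw [discrim] at hdisc
  have hCsq : C ^ 2 ≤ A * B := by nlinarith
  calc |C| = Real.sqrt (C ^ 2) := (Real.sqrt_sq_eq_abs C).symm
    _ ≤ Real.sqrt (A * B) := Real.sqrt_le_sqrt hCsq
    _ = Real.sqrt A * Real.sqrt B := Real.sqrt_mul hA0 B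

/-- Lemma 8: L² estimate for the elliptic state of the target
system.  If `0 = v'' − γv + βw + β∫₀ˣ L(x,y)w(y)dy` on `[0,1]` with Neumann
boundary conditions, then ‖v‖ ≤ (|β|/γ)(1 + ‖L‖)‖w‖. -/
theorem elliptic_state_estimate (γ β c : ℝ) (hγ : γ > 0) (hc : c > 0)
    (w v : ℝ → ℝ)
    (hw : Continuous w)
    (hv : ContDiff ℝ 2 v)
    (hv0 : deriv v 0 = 0) (hv1 : deriv v 1 = 0)
    (hell : ∀ x ∈ Set.Icc (0:ℝ) 1,
      (0 : ℝ) = deriv (deriv v) x - γ * v x + β * w x +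
        β * ∫ y in (0:ℝ)..x, Lker c x y * w y) :
    Real.sqrt (∫ x in (0:ℝ)..1, (v x) ^ 2) ≤
      (|β| / γ) * (1 + kerNorm (Lker c)) * Real.sqrt (∫ x in (0:ℝ)..1, (w x) ^ 2) := by
  have h01 : (0:ℝ) ≤ 1 := by norm_num
  have hLc := Lker_cont c
  -- smoothness facts about v
  have hv' : ContDiff ℝ ((1:ℕ) + 1) v := by exact_mod_cast hv
  obtain ⟨hvd, -, hv1'⟩ := contDiff_succ_iff_deriv.mp hv'
  obtain ⟨hdvd, hddc⟩ := contDiff_one_iff_deriv.mp hv1'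
  have hvc : Continuous v := hvd.continuous
  have hdvc : Continuous (deriv v) := hdvd.continuous
  -- names
  set K : ℝ → ℝ := fun x => ∫ y in (0:ℝ)..x, Lker c x y * w y with hKdef
  set Q : ℝ → ℝ := fun x => ∫ y in (0:ℝ)..x, (Lker c x y) ^ 2 with hQdef
  have hKcont : Continuous K := by
    apply continuous_parametric_intervalIntegral_of_continuous
      (f := fun x y => Lker c x y * w y) (μ := volume) ?_ continuous_id
    exact hLc.mul (hw.comp continuous_snd)
  have hQcont : Continuous Q := by
    apply continuous_parametric_intervalIntegral_of_continuous
      (f := fun x y => (Lker c x y) ^ 2) (μ := volume) ?_ continuous_id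
    exact hLc.pow 2
  -- integration by parts
  have hibp : (∫ x in (0:ℝ)..1, deriv (deriv v) x * v x + deriv v x * deriv v x)
      = deriv v 1 * v 1 - deriv v 0 * v 0 := by
    apply intervalIntegral.integral_deriv_mul_eq_sub_of_hasDerivAt
    · exact hdvc.continuousOn
    · exact hvc.continuousOn
    · exact fun x _ => (hdvd x).hasDerivAt
    · exact fun x _ => (hvd x).hasDerivAt
    · exact hddc.intervalIntegrable 0 1
    · exact hdvc.intervalIntegrable 0 1
  have hddvI : IntervalIntegrable (fun x => deriv (deriv v) x * v x) volume 0 1 :=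
    (hddc.mul hvc).intervalIntegrable 0 1
  have hdvsqI : IntervalIntegrable (fun x => deriv v x * deriv v x) volume 0 1 :=
    (hdvc.mul hdvc).intervalIntegrable 0 1
  have hibpLe : (∫ x in (0:ℝ)..1, deriv (deriv v) x * v x) ≤ 0 := by
    rw [intervalIntegral.integral_add hddvI hdvsqI, hv0, hv1] at hibp
    have h2 : 0 ≤ ∫ x in (0:ℝ)..1, deriv v x * deriv v x :=
      intervalIntegral.integral_nonneg h01 fun u _ => mul_self_nonneg _
    nlinarith [hibp]
  -- main identity
  have hwvI : IntervalIntegrable (fun x => w x * v x) volume 0 1 :=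
    (hw.mul hvc).intervalIntegrable 0 1
  have hKvI : IntervalIntegrable (fun x => K x * v x) volume 0 1 :=
    (hKcont.mul hvc).intervalIntegrable 0 1
  have hmain : γ * (∫ x in (0:ℝ)..1, (v x) ^ 2)
      = (∫ x in (0:ℝ)..1, deriv (deriv v) x * v x)
        + β * (∫ x in (0:ℝ)..1, w x * v x) + β * (∫ x in (0:ℝ)..1, K x * v x) := by
    have hpt : ∀ x ∈ uIcc (0:ℝ) 1, γ * (v x) ^ 2
        = deriv (deriv v) x * v x + β * (w x * v x) + β * (K x * v x) := by
      intro x hx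
      rw [uIcc_of_le h01] at hx
      have h := hell x hx
      have hKx : K x = ∫ y in (0:ℝ)..x, Lker c x y * w y := rfl
      rw [← hKx] at h
      linear_combination (v x) * h
    calc γ * (∫ x in (0:ℝ)..1, (v x) ^ 2)
        = ∫ x in (0:ℝ)..1, γ * (v x) ^ 2 := (intervalIntegral.integral_const_mul _ _).symm
      _ = ∫ x in (0:ℝ)..1,
            (deriv (deriv v) x * v x + β * (w x * v x)) + β * (K x * v x) := by
          apply intervalIntegral.integral_congr
          intro x hx
          show γ * v x ^ 2 = _
          rw [hpt x hx]
      _ = (∫ x in (0:ℝ)..1, deriv (deriv v) x * v x)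
            + β * (∫ x in (0:ℝ)..1, w x * v x) + β * (∫ x in (0:ℝ)..1, K x * v x) := by
          rw [intervalIntegral.integral_add (hddvI.add (hwvI.const_mul _)) (hKvI.const_mul _),
            intervalIntegral.integral_add hddvI (hwvI.const_mul _),
            intervalIntegral.integral_const_mul, intervalIntegral.integral_const_mul]
  -- norms
  set Nv := Real.sqrt (∫ x in (0:ℝ)..1, (v x) ^ 2) with hNv
  set Nw := Real.sqrt (∫ x in (0:ℝ)..1, (w x) ^ 2) with hNw
  set NK := Real.sqrt (∫ x in (0:ℝ)..1, (K x) ^ 2) with hNK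
  have hIv0 : 0 ≤ ∫ x in (0:ℝ)..1, (v x) ^ 2 :=
    intervalIntegral.integral_nonneg h01 fun u _ => sq_nonneg _
  have hIvNv : (∫ x in (0:ℝ)..1, (v x) ^ 2) = Nv ^ 2 := (Real.sq_sqrt hIv0).symm
  have hcs1 : |∫ x in (0:ℝ)..1, w x * v x| ≤ Nw * Nv :=
    cs_abs h01 hw.continuousOn hvc.continuousOn
  have hcs2 : |∫ x in (0:ℝ)..1, K x * v x| ≤ NK * Nv :=
    cs_abs h01 hKcont.continuousOn hvc.continuousOn
  -- bound on NK
  have hW0 : 0 ≤ ∫ t in (0:ℝ)..1, (w t) ^ 2 :=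
    intervalIntegral.integral_nonneg h01 fun u _ => sq_nonneg _
  have hQ0 : ∀ x, 0 ≤ x → 0 ≤ Q x := fun x hx =>
    intervalIntegral.integral_nonneg hx fun u _ => sq_nonneg _
  have hKQ : ∀ x ∈ Icc (0:ℝ) 1, (K x) ^ 2 ≤ Q x * ∫ t in (0:ℝ)..1, (w t) ^ 2 := by
    intro x hx
    have hLxc : Continuous fun y => Lker c x y :=
      hLc.comp (continuous_const.prodMk continuous_id)
    have hcs := cs_abs hx.1 (f := fun y => Lker c x y) (g := w)
      hLxc.continuousOn hw.continuousOn
    have hIx0 : 0 ≤ ∫ t in (0:ℝ)..x, (w t) ^ 2 :=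
      intervalIntegral.integral_nonneg hx.1 fun u _ => sq_nonneg _
    have hmono : (∫ t in (0:ℝ)..x, (w t) ^ 2) ≤ ∫ t in (0:ℝ)..1, (w t) ^ 2 := by
      have hadd := intervalIntegral.integral_add_adjacent_intervals
        (a := (0:ℝ)) (b := x) (c := 1) (f := fun t => (w t) ^ 2) (μ := volume)
        ((hw.pow 2).intervalIntegrable 0 x) ((hw.pow 2).intervalIntegrable x 1)
      have h2 : 0 ≤ ∫ t in x..(1:ℝ), (w t) ^ 2 :=
        intervalIntegral.integral_nonneg hx.2 fun u _ => sq_nonneg _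
      linarith
    calc (K x) ^ 2 = |K x| ^ 2 := (sq_abs _).symm
      _ ≤ (Real.sqrt (Q x) * Real.sqrt (∫ t in (0:ℝ)..x, (w t) ^ 2)) ^ 2 :=
          pow_le_pow_left₀ (abs_nonneg _) hcs 2
      _ = Q x * ∫ t in (0:ℝ)..x, (w t) ^ 2 := by
          rw [mul_pow, Real.sq_sqrt (hQ0 x hx.1), Real.sq_sqrt hIx0]
      _ ≤ Q x * ∫ t in (0:ℝ)..1, (w t) ^ 2 :=
          mul_le_mul_of_nonneg_left hmono (hQ0 x hx.1)
  have hQI0 : 0 ≤ ∫ x in (0:ℝ)..1, Q x :=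
    intervalIntegral.integral_nonneg h01 fun u hu => hQ0 u hu.1
  have hNKle : NK ≤ kerNorm (Lker c) * Nw := by
    have hstep : (∫ x in (0:ℝ)..1, (K x) ^ 2)
        ≤ (∫ x in (0:ℝ)..1, Q x) * ∫ t in (0:ℝ)..1, (w t) ^ 2 := by
      calc (∫ x in (0:ℝ)..1, (K x) ^ 2)
          ≤ ∫ x in (0:ℝ)..1, Q x * ∫ t in (0:ℝ)..1, (w t) ^ 2 := by
            apply intervalIntegral.integral_mono_on h01
              ((hKcont.pow 2).intervalIntegrable 0 1)
              ((hQcont.mul continuous_const).intervalIntegrable 0 1)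
              hKQ
        _ = (∫ x in (0:ℝ)..1, Q x) * ∫ t in (0:ℝ)..1, (w t) ^ 2 :=
            intervalIntegral.integral_mul_const _ _
    have hker : kerNorm (Lker c) = Real.sqrt (∫ x in (0:ℝ)..1, Q x) := rfl
    rw [hker, hNK, ← Real.sqrt_mul hQI0]
    exact Real.sqrt_le_sqrt hstep
  -- put it together
  have hNv0 : 0 ≤ Nv := Real.sqrt_nonneg _
  have hNw0 : 0 ≤ Nw := Real.sqrt_nonneg _
  have hker0 : 0 ≤ kerNorm (Lker c) := Real.sqrt_nonneg _
  have hkey : γ * Nv ^ 2 ≤ |β| * (1 + kerNorm (Lker c)) * Nw * Nv := by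
    have h1 : β * (∫ x in (0:ℝ)..1, w x * v x) ≤ |β| * (Nw * Nv) := by
      calc β * (∫ x in (0:ℝ)..1, w x * v x) ≤ |β * (∫ x in (0:ℝ)..1, w x * v x)| :=
            le_abs_self _
        _ = |β| * |∫ x in (0:ℝ)..1, w x * v x| := abs_mul _ _
        _ ≤ |β| * (Nw * Nv) := mul_le_mul_of_nonneg_left hcs1 (abs_nonneg _)
    have h2 : β * (∫ x in (0:ℝ)..1, K x * v x) ≤ |β| * (NK * Nv) := by
      calc β * (∫ x in (0:ℝ)..1, K x * v x) ≤ |β * (∫ x in (0:ℝ)..1, K x * v x)| :=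
            le_abs_self _
        _ = |β| * |∫ x in (0:ℝ)..1, K x * v x| := abs_mul _ _
        _ ≤ |β| * (NK * Nv) := mul_le_mul_of_nonneg_left hcs2 (abs_nonneg _)
    have h3 : |β| * (NK * Nv) ≤ |β| * (kerNorm (Lker c) * Nw * Nv) := by
      apply mul_le_mul_of_nonneg_left _ (abs_nonneg _)
      exact mul_le_mul_of_nonneg_right hNKle hNv0
    nlinarith [hmain, hibpLe, hIvNv]
  rcases eq_or_lt_of_le hNv0 with h0 | hpos
  · rw [← h0]
    have : 0 ≤ (|β| / γ) * (1 + kerNorm (Lker c)) * Nw :=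
      mul_nonneg (mul_nonneg (div_nonneg (abs_nonneg _) hγ.le) (by linarith)) hNw0
    linarith
  · rw [div_mul_eq_mul_div, div_mul_eq_mul_div, le_div_iff₀ hγ]
    nlinarith [hkey, hpos]
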